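/- arXiv:0801.4629 — 7 statements merged into one kernel-verified Lean document; each statement's English description precedes it below -/
import Mathlib

section
/- Let S be an n×n real matrix with ‖I−S‖_op < 1, let m ∈ ℝⁿ, σ > 0, and let ε be an ℝⁿ-valued random vector with E[εᵢ] = 0, E[εᵢεⱼ] = 0 for i ≠ j, and E[εᵢ²] = σ² for all i. Set Y = m + ε and m̂ₖ = (I − (I−S)^k) Y. Then lim_{k→∞} E[‖m̂ₖ − m‖²] = n σ². -/
open Matrix MeasureTheory Filter

/-!
Writing `C = (I - S)^k`, the error is `m̂ₖ - m = -C m + (I - C) ε`. Since `ε` is centred with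
covariance `σ² I`, the cross term vanishes in expectation and
`E‖m̂ₖ - m‖² = ‖C m‖² + σ² ‖I - C‖_F²`, a continuous function of `C`. The operator norm of `I - S`
being below one forces `C → 0`, so the mean squared error tends to `σ² ‖I‖_F² = n σ²`.
-/

theorem Matrix.tendsto_pow_atTop_nhds_zero_of_norm_toEuclideanCLM_lt_one {𝕜 ι : Type*} [RCLike 𝕜]
    [Fintype ι] [DecidableEq ι] {A : Matrix ι ι 𝕜} (hA : ‖toEuclideanCLM (𝕜 := 𝕜) A‖ < 1) :
    Tendsto (fun k : ℕ => A ^ k) atTop (nhds 0) := by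
  have hsymm : Continuous (toEuclideanCLM (𝕜 := 𝕜) (n := ι)).symm :=
    LinearMap.continuous_of_finiteDimensional
      (toEuclideanCLM (𝕜 := 𝕜) (n := ι)).symm.toAlgEquiv.toLinearEquiv.toLinearMap
  simpa [Function.comp_def] using
    (hsymm.tendsto 0).comp (tendsto_pow_atTop_nhds_zero_of_norm_lt_one hA)

section Moments

variable {Ω ι κ : Type*} [MeasurableSpace Ω] {μ : Measure Ω} [Fintype ι] [Fintype κ]

theorem integrable_const_add_sq [IsFiniteMeasure μ] {X : Ω → ℝ} (c : ℝ) (hX : Integrable X μ)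
    (hX2 : Integrable (fun ω => X ω ^ 2) μ) : Integrable (fun ω => (c + X ω) ^ 2) μ :=
  ((integrable_const (c ^ 2)).add ((hX.const_mul (2 * c)).add hX2)).congr
    (ae_of_all _ fun ω => by simp only [Pi.add_apply]; ring)

theorem integral_const_add_sq [IsProbabilityMeasure μ] {X : Ω → ℝ} (c : ℝ) (hX : Integrable X μ)
    (hX2 : Integrable (fun ω => X ω ^ 2) μ) (hmean : ∫ ω, X ω ∂μ = 0) :
    ∫ ω, (c + X ω) ^ 2 ∂μ = c ^ 2 + ∫ ω, X ω ^ 2 ∂μ := by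
  have hlin : Integrable (fun ω => 2 * c * X ω + X ω ^ 2) μ := (hX.const_mul _).add hX2
  calc ∫ ω, (c + X ω) ^ 2 ∂μ = ∫ ω, c ^ 2 + (2 * c * X ω + X ω ^ 2) ∂μ :=
        integral_congr_ae (ae_of_all _ fun ω => by ring)
    _ = c ^ 2 + ∫ ω, X ω ^ 2 ∂μ := by
      rw [integral_add (integrable_const _) hlin, integral_add (hX.const_mul _) hX2,
        integral_const_mul, hmean]
      simp

theorem integrable_dotProduct (ε : Ω → ι → ℝ) (hint : ∀ i, Integrable (fun ω => ε ω i) μ)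
    (a : ι → ℝ) : Integrable (fun ω => a ⬝ᵥ ε ω) μ :=
  integrable_finsetSum _ fun j _ => (hint j).const_mul (a j)

theorem integral_dotProduct (ε : Ω → ι → ℝ) (hint : ∀ i, Integrable (fun ω => ε ω i) μ)
    (hmean : ∀ i, ∫ ω, ε ω i ∂μ = 0) (a : ι → ℝ) : ∫ ω, a ⬝ᵥ ε ω ∂μ = 0 := by
  simp only [dotProduct]
  rw [integral_finsetSum _ fun j _ => (hint j).const_mul (a j)]
  simp [integral_const_mul, hmean]

theorem dotProduct_sq_eq_sum_sum (a x : ι → ℝ) :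
    (a ⬝ᵥ x) ^ 2 = ∑ j, ∑ l, a j * a l * (x j * x l) := by
  rw [sq, dotProduct, Finset.sum_mul_sum]
  exact Finset.sum_congr rfl fun j _ => Finset.sum_congr rfl fun l _ => by ring

theorem integrable_dotProduct_sq (ε : Ω → ι → ℝ)
    (hint2 : ∀ i j, Integrable (fun ω => ε ω i * ε ω j) μ) (a : ι → ℝ) :
    Integrable (fun ω => (a ⬝ᵥ ε ω) ^ 2) μ := by
  simp only [dotProduct_sq_eq_sum_sum]
  exact integrable_finsetSum _ fun j _ =>
    integrable_finsetSum _ fun l _ => (hint2 j l).const_mul _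

theorem integral_dotProduct_sq (ε : Ω → ι → ℝ) (σ : ℝ)
    (hint2 : ∀ i j, Integrable (fun ω => ε ω i * ε ω j) μ)
    (huncorr : ∀ i j, i ≠ j → ∫ ω, ε ω i * ε ω j ∂μ = 0)
    (hvar : ∀ i, ∫ ω, ε ω i * ε ω i ∂μ = σ ^ 2) (a : ι → ℝ) :
    ∫ ω, (a ⬝ᵥ ε ω) ^ 2 ∂μ = σ ^ 2 * ∑ j, a j ^ 2 := by
  simp only [dotProduct_sq_eq_sum_sum]
  rw [integral_finsetSum _ fun j _ =>
    integrable_finsetSum _ fun l _ => (hint2 j l).const_mul _, Finset.mul_sum]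
  refine Finset.sum_congr rfl fun j _ => ?_
  rw [integral_finsetSum _ fun l _ => (hint2 j l).const_mul _,
    Finset.sum_eq_single_of_mem j (Finset.mem_univ j) fun l _ hl => by
      rw [integral_const_mul, huncorr j l (Ne.symm hl), mul_zero],
    integral_const_mul, hvar]
  ring

theorem integral_norm_sq_add_mulVec [IsProbabilityMeasure μ] (ε : Ω → ι → ℝ) (σ : ℝ)
    (hint : ∀ i, Integrable (fun ω => ε ω i) μ)
    (hint2 : ∀ i j, Integrable (fun ω => ε ω i * ε ω j) μ)
    (hmean : ∀ i, ∫ ω, ε ω i ∂μ = 0)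
    (huncorr : ∀ i j, i ≠ j → ∫ ω, ε ω i * ε ω j ∂μ = 0)
    (hvar : ∀ i, ∫ ω, ε ω i * ε ω i ∂μ = σ ^ 2) (v : κ → ℝ) (A : Matrix κ ι ℝ) :
    ∫ ω, ‖(WithLp.equiv 2 (κ → ℝ)).symm (v + A *ᵥ ε ω)‖ ^ 2 ∂μ
      = ∑ i, v i ^ 2 + σ ^ 2 * ∑ i, ∑ j, A i j ^ 2 := by
  simp only [EuclideanSpace.real_norm_sq_eq, WithLp.equiv_symm_apply,
    Pi.add_apply, mulVec]
  rw [integral_finsetSum _ fun i _ => ?_, Finset.mul_sum, ← Finset.sum_add_distrib]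
  · refine Finset.sum_congr rfl fun i _ => ?_
    rw [integral_const_add_sq _ (integrable_dotProduct ε hint _)
      (integrable_dotProduct_sq ε hint2 _) (integral_dotProduct ε hint hmean _),
      integral_dotProduct_sq ε σ hint2 huncorr hvar]
  exact integrable_const_add_sq _ (integrable_dotProduct ε hint _)
    (integrable_dotProduct_sq ε hint2 _)

end Moments

theorem Matrix.one_sub_mulVec_add_sub {R ι : Type*} [Ring R] [Fintype ι] [DecidableEq ι]
    (C : Matrix ι ι R) (m e : ι → R) : (1 - C) *ᵥ (m + e) - m = -(C *ᵥ m) + (1 - C) *ᵥ e := by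
  rw [mulVec_add, sub_mulVec, one_mulVec]
  abel

theorem mse_tendsto_n_sigma_sq_general
    {Ω : Type*} [MeasureSpace Ω] [IsProbabilityMeasure (volume : Measure Ω)]
    {n : ℕ} (S : Matrix (Fin n) (Fin n) ℝ)
    (hcontr : ‖Matrix.toEuclideanCLM (𝕜 := ℝ) (n := Fin n)
        ((1 : Matrix (Fin n) (Fin n) ℝ) - S)‖ < 1)
    (m : Fin n → ℝ) (σ : ℝ)
    (ε : Ω → Fin n → ℝ)
    (hint : ∀ i, Integrable (fun ω => ε ω i))
    (hint2 : ∀ i j, Integrable (fun ω => ε ω i * ε ω j))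
    (hmean : ∀ i, (∫ ω, ε ω i) = 0)
    (huncorr : ∀ i j, i ≠ j → (∫ ω, ε ω i * ε ω j) = 0)
    (hvar : ∀ i, (∫ ω, ε ω i * ε ω i) = σ ^ 2)
    (Y : Ω → Fin n → ℝ) (hY : ∀ ω, Y ω = m + ε ω)
    (mhat : ℕ → Ω → Fin n → ℝ)
    (hmhat : ∀ k ω, mhat k ω =
      ((1 : Matrix (Fin n) (Fin n) ℝ) - ((1 : Matrix (Fin n) (Fin n) ℝ) - S) ^ k).mulVec (Y ω)) :
    Tendsto (fun k => ∫ ω, ‖(WithLp.equiv 2 (Fin n → ℝ)).symm (mhat k ω - m)‖ ^ 2)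
      atTop (nhds (n * σ ^ 2)) := by
  set mse : Matrix (Fin n) (Fin n) ℝ → ℝ :=
    fun C => ∑ i, (C *ᵥ m) i ^ 2 + σ ^ 2 * ∑ i, ∑ j, (1 - C) i j ^ 2
  have hmse : ∀ k, ∫ ω, ‖(WithLp.equiv 2 (Fin n → ℝ)).symm (mhat k ω - m)‖ ^ 2
      = mse ((1 - S) ^ k) := fun k => by
    simp only [hmhat, hY, one_sub_mulVec_add_sub,
      integral_norm_sq_add_mulVec ε σ hint hint2 hmean huncorr hvar, Pi.neg_apply, neg_sq, mse]
  have hmse_zero : mse 0 = n * σ ^ 2 := by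
    simp [mse, one_apply, mul_comm]
  have hcont : Continuous mse := by fun_prop
  simp only [hmse, ← hmse_zero]
  exact (hcont.tendsto 0).comp (tendsto_pow_atTop_nhds_zero_of_norm_toEuclideanCLM_lt_one hcontr)

/-- **Limit of the mean squared error of the boosted smoother.**
If `‖I−S‖_op < 1`, `Y = m + ε` with uncorrelated mean-zero errors of variance `σ²`,
and `m̂ₖ = (I − (I−S)^k) Y`, then `E[‖m̂ₖ − m‖²] → n σ²` as `k → ∞`. -/
theorem mse_tendsto_n_sigma_sq
    {Ω : Type*} [MeasureSpace Ω] [IsProbabilityMeasure (volume : Measure Ω)]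
    {n : ℕ} (S : Matrix (Fin n) (Fin n) ℝ)
    (hcontr : ‖Matrix.toEuclideanCLM (𝕜 := ℝ) (n := Fin n)
        ((1 : Matrix (Fin n) (Fin n) ℝ) - S)‖ < 1)
    (m : Fin n → ℝ) (σ : ℝ) (hσ : 0 < σ)
    (ε : Ω → Fin n → ℝ)
    (hint : ∀ i, Integrable (fun ω => ε ω i))
    (hint2 : ∀ i j, Integrable (fun ω => ε ω i * ε ω j))
    (hmean : ∀ i, (∫ ω, ε ω i) = 0)
    (huncorr : ∀ i j, i ≠ j → (∫ ω, ε ω i * ε ω j) = 0)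
    (hvar : ∀ i, (∫ ω, ε ω i * ε ω i) = σ ^ 2)
    (Y : Ω → Fin n → ℝ) (hY : ∀ ω, Y ω = m + ε ω)
    (mhat : ℕ → Ω → Fin n → ℝ)
    (hmhat : ∀ k ω, mhat k ω =
      ((1 : Matrix (Fin n) (Fin n) ℝ) - ((1 : Matrix (Fin n) (Fin n) ℝ) - S) ^ k).mulVec (Y ω)) :
    Tendsto (fun k => ∫ ω, ‖(WithLp.equiv 2 (Fin n → ℝ)).symm (mhat k ω - m)‖ ^ 2)
      atTop (nhds (n * σ ^ 2)) :=
  mse_tendsto_n_sigma_sq_general S hcontr m σ ε hint hint2 hmean huncorr hvar Y hY mhat hmhat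
end

section
/- Let S be a symmetric n×n real matrix such that I−S has an eigenvalue μ with |μ| > 1. Then there exists Y ∈ ℝⁿ such that, with Rₖ = (I−S)^k Y, b̂ₖ = −(I−S)^{k−1} S Y and m̂ₖ = (I − (I−S)^k) Y, one has ‖Rₖ‖ → ∞, ‖b̂ₖ‖ → ∞ and ‖m̂ₖ‖ → ∞ as k → ∞. In particular ‖(I−S)^k‖_op → ∞. -/
/-!
Take for `Y` an eigenvector `v` of `I - S` for `μ`. Then `Rₖ`, `b̂ₖ` and `m̂ₖ` are the multiples
`μ ^ k • v`, `((μ - 1) * μ ^ (k - 1)) • v` and `(1 - μ ^ k) • v` of `v`, whose coefficients blow up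
because `|μ| > 1` (and hence `μ ≠ 1`); and `‖(I - S) ^ k‖_op ≥ |μ| ^ k` since `v` is an
eigenvector of `(I - S) ^ k` for `μ ^ k`.
-/

open Matrix Filter

theorem Matrix.pow_mulVec_of_mulVec_eq_smul {ι R : Type*} [Fintype ι] [DecidableEq ι] [CommRing R]
    {A : Matrix ι ι R} {v : ι → R} {μ : R} (h : A *ᵥ v = μ • v) (k : ℕ) :
    (A ^ k) *ᵥ v = μ ^ k • v := by
  induction k with
  | zero => simp
  | succ k ih => rw [pow_succ, ← mulVec_mulVec, h, mulVec_smul, ih, smul_smul, pow_succ']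

theorem Matrix.mulVec_eq_one_sub_smul_of_one_sub_mulVec_eq_smul {ι R : Type*} [Fintype ι]
    [DecidableEq ι] [CommRing R] {S : Matrix ι ι R} {v : ι → R} {μ : R} (h : (1 - S) *ᵥ v = μ • v) :
    S *ᵥ v = (1 - μ) • v := by
  rw [sub_mulVec, one_mulVec] at h
  rw [sub_smul, one_smul, ← h, sub_sub_cancel]

section
variable {𝕜 : Type*} [NormedDivisionRing 𝕜] {μ : 𝕜}

theorem tendsto_norm_pow_atTop (hμ : 1 < ‖μ‖) : Tendsto (fun k : ℕ => ‖μ ^ k‖) atTop atTop := by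
  simpa only [norm_pow] using tendsto_pow_atTop_atTop_of_one_lt hμ

theorem tendsto_norm_mul_pow_sub_one_atTop {c : 𝕜} (hc : c ≠ 0) (hμ : 1 < ‖μ‖) :
    Tendsto (fun k : ℕ => ‖c * μ ^ (k - 1)‖) atTop atTop := by
  simp only [norm_mul]
  exact ((tendsto_norm_pow_atTop hμ).comp (tendsto_sub_atTop_nat 1)).const_mul_atTop
    (norm_pos_iff.mpr hc)

theorem tendsto_norm_one_sub_pow_atTop (hμ : 1 < ‖μ‖) :
    Tendsto (fun k : ℕ => ‖1 - μ ^ k‖) atTop atTop := by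
  refine tendsto_atTop_mono (fun k => ?_)
    (tendsto_atTop_add_const_right atTop (-1) (tendsto_norm_pow_atTop hμ))
  rw [norm_sub_rev, ← sub_eq_add_neg]
  simpa using norm_sub_norm_le (μ ^ k) 1

end

theorem tendsto_norm_smul_atTop {α 𝕜 E : Type*} [NormedDivisionRing 𝕜] [NormedAddCommGroup E]
    [Module 𝕜 E] [NormSMulClass 𝕜 E] {l : Filter α} {c : α → 𝕜}
    (hc : Tendsto (fun a => ‖c a‖) l atTop) {x : E} (hx : x ≠ 0) :
    Tendsto (fun a => ‖c a • x‖) l atTop := by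
  simpa only [norm_smul] using hc.atTop_mul_const (norm_pos_iff.mpr hx)

theorem ContinuousLinearMap.norm_le_opNorm_of_apply_eq_smul {𝕜 E : Type*}
    [NontriviallyNormedField 𝕜] [NormedAddCommGroup E] [NormedSpace 𝕜 E] (T : E →L[𝕜] E)
    {x : E} (hx : x ≠ 0) {c : 𝕜} (h : T x = c • x) : ‖c‖ ≤ ‖T‖ := by
  have := T.le_opNorm x
  rw [h, norm_smul] at this
  exact le_of_mul_le_mul_right this (norm_pos_iff.mpr hx)

theorem divergence_of_boosting_eigenvalue_gt_one_general
    {n : ℕ} (S : Matrix (Fin n) (Fin n) ℝ)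
    (μ : ℝ) (hμ : 1 < |μ|)
    (hEig : ∃ v : Fin n → ℝ, v ≠ 0 ∧
      ((1 : Matrix (Fin n) (Fin n) ℝ) - S).mulVec v = μ • v) :
    ∃ Y : Fin n → ℝ,
      Tendsto (fun k : ℕ =>
          ‖(WithLp.equiv 2 (Fin n → ℝ)).symm
            ((((1 : Matrix (Fin n) (Fin n) ℝ) - S) ^ k).mulVec Y)‖) atTop atTop ∧
      Tendsto (fun k : ℕ =>
          ‖(WithLp.equiv 2 (Fin n → ℝ)).symm
            (-(((((1 : Matrix (Fin n) (Fin n) ℝ) - S) ^ (k - 1)) * S).mulVec Y))‖) atTop atTop ∧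
      Tendsto (fun k : ℕ =>
          ‖(WithLp.equiv 2 (Fin n → ℝ)).symm
            (((1 : Matrix (Fin n) (Fin n) ℝ) -
              ((1 : Matrix (Fin n) (Fin n) ℝ) - S) ^ k).mulVec Y)‖) atTop atTop ∧
      Tendsto (fun k : ℕ =>
          ‖Matrix.toEuclideanCLM (𝕜 := ℝ) (n := Fin n)
            ((((1 : Matrix (Fin n) (Fin n) ℝ) - S) ^ k))‖) atTop atTop := by
  obtain ⟨v, hv, heig⟩ := hEig
  have hμ' : 1 < ‖μ‖ := hμ
  have hpow := pow_mulVec_of_mulVec_eq_smul heig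
  have hx : WithLp.toLp 2 v ≠ 0 := by simpa using hv
  have hμ1 : μ - 1 ≠ 0 := sub_ne_zero.mpr fun h => by simp [h] at hμ'
  have hbias (k : ℕ) : -(((1 - S) ^ (k - 1) * S) *ᵥ v) = ((μ - 1) * μ ^ (k - 1)) • v := by
    rw [← mulVec_mulVec, mulVec_eq_one_sub_smul_of_one_sub_mulVec_eq_smul heig, mulVec_smul, hpow,
      smul_smul, ← neg_smul, ← neg_mul, neg_sub]
  have hsmoother (k : ℕ) : (1 - (1 - S) ^ k) *ᵥ v = (1 - μ ^ k) • v := by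
    rw [sub_mulVec, one_mulVec, hpow, sub_smul, one_smul]
  refine ⟨v, ?_, ?_, ?_, ?_⟩
  · simpa [hpow] using tendsto_norm_smul_atTop (tendsto_norm_pow_atTop hμ') hx
  · simpa [hbias] using tendsto_norm_smul_atTop (tendsto_norm_mul_pow_sub_one_atTop hμ1 hμ') hx
  · simpa [hsmoother] using tendsto_norm_smul_atTop (tendsto_norm_one_sub_pow_atTop hμ') hx
  · refine tendsto_atTop_mono (fun k => ?_) (tendsto_norm_pow_atTop hμ')
    exact ContinuousLinearMap.norm_le_opNorm_of_apply_eq_smul _ hx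
      (by rw [toEuclideanCLM_toLp, hpow, WithLp.toLp_smul])

/-- **Divergence of boosting when `I−S` has an eigenvalue of modulus larger than one.**
If `S` is symmetric and `I−S` has a (real) eigenvalue `μ` with `|μ| > 1`, then there is a
`Y ∈ ℝⁿ` for which the residuals `Rₖ = (I−S)^k Y`, the estimated bias
`b̂ₖ = −(I−S)^{k−1} S Y` and the boosted smoother `m̂ₖ = (I − (I−S)^k) Y` all blow up
in Euclidean norm; in particular the operator norm of `(I−S)^k` tends to infinity. -/
theorem divergence_of_boosting_eigenvalue_gt_one
    {n : ℕ} (S : Matrix (Fin n) (Fin n) ℝ) (hS : S.IsSymm)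
    (μ : ℝ) (hμ : 1 < |μ|)
    (hEig : ∃ v : Fin n → ℝ, v ≠ 0 ∧
      ((1 : Matrix (Fin n) (Fin n) ℝ) - S).mulVec v = μ • v) :
    ∃ Y : Fin n → ℝ,
      Tendsto (fun k : ℕ =>
          ‖(WithLp.equiv 2 (Fin n → ℝ)).symm
            ((((1 : Matrix (Fin n) (Fin n) ℝ) - S) ^ k).mulVec Y)‖) atTop atTop ∧
      Tendsto (fun k : ℕ =>
          ‖(WithLp.equiv 2 (Fin n → ℝ)).symm
            (-(((((1 : Matrix (Fin n) (Fin n) ℝ) - S) ^ (k - 1)) * S).mulVec Y))‖) atTop atTop ∧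
      Tendsto (fun k : ℕ =>
          ‖(WithLp.equiv 2 (Fin n → ℝ)).symm
            (((1 : Matrix (Fin n) (Fin n) ℝ) -
              ((1 : Matrix (Fin n) (Fin n) ℝ) - S) ^ k).mulVec Y)‖) atTop atTop ∧
      Tendsto (fun k : ℕ =>
          ‖Matrix.toEuclideanCLM (𝕜 := ℝ) (n := Fin n)
            ((((1 : Matrix (Fin n) (Fin n) ℝ) - S) ^ k))‖) atTop atTop :=
  divergence_of_boosting_eigenvalue_gt_one_general S μ hμ hEig
end

section
/- Let S be a symmetric n×n real matrix all of whose eigenvalues lie in the interval [0,1]. Then for every m ∈ ℝⁿ and every k ≥ 1: (a) ‖(I−S)^{k+1} m‖ ≤ ‖(I−S)^k m‖, i.e. each bias-correction iteration does not increase the squared bias; and (b) (I − (I−S)^{k+1})² − (I − (I−S)^k)² is positive semidefinite, i.e. each iteration does not decrease the variance matrix σ²(I − (I−S)^k)² in the Loewner order. -/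
/-!
Every matrix in the statement is a polynomial in `S`, and by the continuous functional calculus
a polynomial in a self-adjoint matrix is positive semidefinite as soon as the polynomial is
nonnegative on its spectrum, which here lies in `[0, 1]`. Writing `t = 1 - λ` for `λ` in the
spectrum, the two claims reduce to the scalar inequalities `t ^ (2k + 2) ≤ t ^ (2k)` (as `I - S`
is symmetric, the squared bias is the quadratic form of `(I - S) ^ (2k)`) and
`(1 - t ^ k) ^ 2 ≤ (1 - t ^ (k + 1)) ^ 2`.
-/

open Matrix Polynomial
open scoped ComplexOrder MatrixOrder

theorem Polynomial.aeval_nonneg_of_forall_mem_spectrum {A : Type*} [TopologicalSpace A] [Ring A]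
    [StarRing A] [PartialOrder A] [StarOrderedRing A] [Algebra ℝ A]
    [ContinuousFunctionalCalculus ℝ A IsSelfAdjoint] {a : A} (ha : IsSelfAdjoint a) {q : ℝ[X]}
    (hq : ∀ x ∈ spectrum ℝ a, 0 ≤ q.eval x) : 0 ≤ aeval a q :=
  cfc_polynomial q a ▸ cfc_nonneg hq

theorem Matrix.spectrum_subset_of_forall_mulVec_eq_smul {n K : Type*} [Fintype n] [DecidableEq n]
    [Field K] {M : Matrix n n K} {s : Set K}
    (h : ∀ (μ : K) (v : n → K), v ≠ 0 → M *ᵥ v = μ • v → μ ∈ s) :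
    spectrum K M ⊆ s := by
  intro μ hμ
  rw [← spectrum_toLin', ← Module.End.hasEigenvalue_iff_mem_spectrum] at hμ
  obtain ⟨v, hv, hv0⟩ := hμ.exists_hasEigenvector
  exact h μ v hv0 (by simpa using Module.End.mem_eigenspace_iff.mp hv)

theorem Matrix.norm_toLp_mulVec_le_of_posSemidef {𝕜 m n : Type*} [RCLike 𝕜] [Fintype m]
    [Fintype n] {A B : Matrix m n 𝕜} (h : (Bᴴ * B - Aᴴ * A).PosSemidef) (x : n → 𝕜) :
    ‖WithLp.toLp 2 (A *ᵥ x)‖ ≤ ‖WithLp.toLp 2 (B *ᵥ x)‖ := by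
  have hquad := h.dotProduct_mulVec_nonneg x
  rw [sub_mulVec, dotProduct_sub, ← mulVec_mulVec, ← mulVec_mulVec, dotProduct_mulVec,
    dotProduct_mulVec (star x), vecMul_conjTranspose, vecMul_conjTranspose, star_star,
    sub_nonneg] at hquad
  have hsq (v : m → 𝕜) : star v ⬝ᵥ v = ((‖WithLp.toLp 2 v‖ ^ 2 : ℝ) : 𝕜) := by
    rw [RCLike.ofReal_pow, ← inner_self_eq_norm_sq_to_K, EuclideanSpace.inner_toLp_toLp,
      dotProduct_comm]
  rw [hsq, hsq, RCLike.ofReal_le_ofReal] at hquad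
  exact (pow_le_pow_iff_left₀ (norm_nonneg _) (norm_nonneg _) two_ne_zero).mp hquad

theorem sq_one_sub_pow_le_sq_one_sub_pow_succ {t : ℝ} (h₀ : 0 ≤ t) (h₁ : t ≤ 1) (k : ℕ) :
    (1 - t ^ k) ^ 2 ≤ (1 - t ^ (k + 1)) ^ 2 :=
  pow_le_pow_left₀ (sub_nonneg.mpr (pow_le_one₀ h₀ h₁))
    (sub_le_sub_left (pow_le_pow_of_le_one h₀ h₁ k.le_succ) 1) 2

/-- **Monotone bias decrease and variance increase for symmetric smoothers.**
If `S` is symmetric with all eigenvalues in `[0,1]`, then for every `m` and `k ≥ 1`: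
(a) `‖(I−S)^{k+1} m‖ ≤ ‖(I−S)^k m‖` (the squared bias does not increase), and
(b) `(I − (I−S)^{k+1})² − (I − (I−S)^k)²` is positive semidefinite (the variance
matrix does not decrease in the Loewner order). -/
theorem bias_decreases_variance_increases
    {n : ℕ} (S : Matrix (Fin n) (Fin n) ℝ) (hS : S.IsSymm)
    (hEig : ∀ (μ : ℝ) (v : Fin n → ℝ), v ≠ 0 → S.mulVec v = μ • v → μ ∈ Set.Icc (0 : ℝ) 1) :
    ∀ (m : Fin n → ℝ) (k : ℕ), 1 ≤ k →
      (‖(WithLp.equiv 2 (Fin n → ℝ)).symm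
          ((((1 : Matrix (Fin n) (Fin n) ℝ) - S) ^ (k + 1)).mulVec m)‖ ≤
        ‖(WithLp.equiv 2 (Fin n → ℝ)).symm
          ((((1 : Matrix (Fin n) (Fin n) ℝ) - S) ^ k).mulVec m)‖) ∧
      (((1 : Matrix (Fin n) (Fin n) ℝ) -
          ((1 : Matrix (Fin n) (Fin n) ℝ) - S) ^ (k + 1)) ^ 2 -
        ((1 : Matrix (Fin n) (Fin n) ℝ) -
          ((1 : Matrix (Fin n) (Fin n) ℝ) - S) ^ k) ^ 2).PosSemidef := by
  intro m k _
  have hSh : S.IsHermitian := isHermitian_iff_isSymm.mpr hS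
  have hspec : spectrum ℝ S ⊆ Set.Icc 0 1 := spectrum_subset_of_forall_mulVec_eq_smul hEig
  have hT : (1 - S).IsHermitian := isHermitian_one.sub hSh
  refine ⟨norm_toLp_mulVec_le_of_posSemidef ?_ m, ?_⟩ <;> rw [← nonneg_iff_posSemidef]
  · rw [(hT.pow _).eq, (hT.pow _).eq, ← pow_add, ← pow_add]
    convert aeval_nonneg_of_forall_mem_spectrum hSh.isSelfAdjoint
      (q := (1 - X) ^ (k + k) - (1 - X) ^ (k + 1 + (k + 1))) fun x hx => ?_
    · simp
    · obtain ⟨h₀, h₁⟩ := hspec hx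
      simpa using pow_le_pow_of_le_one (sub_nonneg.mpr h₁) (sub_le_self 1 h₀) (by omega)
  · convert aeval_nonneg_of_forall_mem_spectrum hSh.isSelfAdjoint
      (q := (1 - (1 - X) ^ (k + 1)) ^ 2 - (1 - (1 - X) ^ k) ^ 2) fun x hx => ?_
    · simp
    · obtain ⟨h₀, h₁⟩ := hspec hx
      simpa using sq_one_sub_pow_le_sq_one_sub_pow_succ (sub_nonneg.mpr h₁) (sub_le_self 1 h₀) k
end

section
/- Let 𝕂 be a symmetric positive semidefinite n×n real matrix with nonnegative entries such that every row sum rᵢ = Σⱼ 𝕂ᵢⱼ is strictly positive. Let D be the diagonal matrix with Dᵢᵢ = 1/rᵢ and set S = D𝕂. Then every eigenvalue of S is real and lies in the interval [0,1]. -/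
open Matrix Finset

/-- **Spectrum of the Nadaraya–Watson smoother with a positive semidefinite kernel matrix.**
If `𝕂` is symmetric positive semidefinite with nonnegative entries and strictly positive
row sums `rᵢ`, and `D = diag(1/rᵢ)`, then every (complex) eigenvalue of `S = D𝕂` is real
and lies in `[0,1]`. -/
theorem nadaraya_watson_psd_kernel_spectrum
    {n : ℕ} (𝕂 : Matrix (Fin n) (Fin n) ℝ)
    (hsymm : 𝕂.IsSymm) (hpsd : 𝕂.PosSemidef)
    (hnonneg : ∀ i j, 0 ≤ 𝕂 i j)
    (r : Fin n → ℝ) (hr : ∀ i, r i = ∑ j, 𝕂 i j) (hrpos : ∀ i, 0 < r i)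
    (S : Matrix (Fin n) (Fin n) ℝ)
    (hS : S = Matrix.diagonal (fun i => (r i)⁻¹) * 𝕂) :
    ∀ (μ : ℂ) (v : Fin n → ℂ), v ≠ 0 →
      (S.map (Complex.ofReal)).mulVec v = μ • v →
      μ.im = 0 ∧ 0 ≤ μ.re ∧ μ.re ≤ 1 := by
  intro μ v hv heig
  set a : Fin n → ℝ := fun i => (v i).re with ha
  set b : Fin n → ℝ := fun i => (v i).im with hb
  -- scalar eigen equation
  have hv' : ∀ i, ∑ j, (𝕂 i j : ℂ) * v j = μ * (r i : ℂ) * v i := by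
    intro i
    have h1 := congrFun heig i
    simp only [hS, Matrix.mulVec, dotProduct, Matrix.map_apply,
      Matrix.diagonal_mul, Pi.smul_apply, smul_eq_mul, Complex.ofReal_mul,
      Complex.ofReal_inv] at h1
    have hrne : ((r i : ℂ)) ≠ 0 := by
      exact_mod_cast (hrpos i).ne'
    calc ∑ j, (𝕂 i j : ℂ) * v j
        = (r i : ℂ) * ∑ j, ((r i : ℂ))⁻¹ * (𝕂 i j : ℂ) * v j := by
          rw [Finset.mul_sum]
          refine Finset.sum_congr rfl fun j _ => ?_
          field_simp
      _ = (r i : ℂ) * (μ * v i) := by rw [h1]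
      _ = μ * (r i : ℂ) * v i := by ring
  set c : ℝ := ∑ i, r i * Complex.normSq (v i) with hc
  have hcpos : 0 < c := by
    obtain ⟨i₀, hi₀⟩ : ∃ i, v i ≠ 0 := by
      by_contra h
      push_neg at h
      exact hv (funext h)
    refine Finset.sum_pos' (fun i _ => mul_nonneg (hrpos i).le (Complex.normSq_nonneg _)) ?_
    exact ⟨i₀, Finset.mem_univ _, mul_pos (hrpos i₀) (Complex.normSq_pos.mpr hi₀)⟩
  set E : ℂ := ∑ i, ∑ j, (𝕂 i j : ℂ) * ((starRingEnd ℂ) (v i) * v j) with hE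
  -- E = μ * c
  have hEμc : E = μ * (c : ℂ) := by
    have : E = ∑ i, (starRingEnd ℂ) (v i) * ∑ j, (𝕂 i j : ℂ) * v j := by
      rw [hE]
      refine Finset.sum_congr rfl fun i _ => ?_
      rw [Finset.mul_sum]
      exact Finset.sum_congr rfl fun j _ => by ring
    rw [this]
    have : ∀ i : Fin n, (starRingEnd ℂ) (v i) * (μ * (r i : ℂ) * v i)
        = μ * ((r i : ℂ) * (Complex.normSq (v i) : ℂ)) := by
      intro i
      rw [show (Complex.normSq (v i) : ℂ) = (starRingEnd ℂ) (v i) * v i from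
        (Complex.normSq_eq_conj_mul_self).symm ▸ rfl]
      ring
    simp_rw [hv', this, ← Finset.mul_sum]
    congr 1
    rw [hc]
    push_cast
    rfl
  -- real/imag parts of E
  have hEre : E.re = ∑ i, ∑ j, 𝕂 i j * (a i * a j + b i * b j) := by
    rw [hE, Complex.re_sum]
    refine Finset.sum_congr rfl fun i _ => ?_
    rw [Complex.re_sum]
    refine Finset.sum_congr rfl fun j _ => ?_
    simp only [Complex.mul_re, Complex.mul_im, Complex.conj_re, Complex.conj_im,
      Complex.ofReal_re, Complex.ofReal_im, ha, hb]
    ring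
  have hEim : E.im = ∑ i, ∑ j, 𝕂 i j * (a i * b j - b i * a j) := by
    rw [hE, Complex.im_sum]
    refine Finset.sum_congr rfl fun i _ => ?_
    rw [Complex.im_sum]
    refine Finset.sum_congr rfl fun j _ => ?_
    simp only [Complex.mul_re, Complex.mul_im, Complex.conj_re, Complex.conj_im,
      Complex.ofReal_re, Complex.ofReal_im, ha, hb]
    ring
  -- E is real
  have hEim0 : E.im = 0 := by
    rw [hEim]
    have hswap : ∑ i, ∑ j, 𝕂 i j * (a i * b j) = ∑ i, ∑ j, 𝕂 i j * (b i * a j) := by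
      rw [Finset.sum_comm]
      refine Finset.sum_congr rfl fun i _ => Finset.sum_congr rfl fun j _ => ?_
      rw [hsymm.apply i j]
      ring
    have : ∑ i, ∑ j, 𝕂 i j * (a i * b j - b i * a j)
        = (∑ i, ∑ j, 𝕂 i j * (a i * b j)) - ∑ i, ∑ j, 𝕂 i j * (b i * a j) := by
      rw [← Finset.sum_sub_distrib]
      refine Finset.sum_congr rfl fun i _ => ?_
      rw [← Finset.sum_sub_distrib]
      exact Finset.sum_congr rfl fun j _ => by ring
    rw [this, hswap, sub_self]
  -- E.re ≥ 0 from positive semidefiniteness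
  have hquad : ∀ x : Fin n → ℝ, 0 ≤ ∑ i, ∑ j, 𝕂 i j * (x i * x j) := by
    intro x
    have h := hpsd.dotProduct_mulVec_nonneg x
    simpa [dotProduct, Matrix.mulVec, Finset.mul_sum, mul_assoc, mul_comm,
      mul_left_comm] using h
  have hEre0 : 0 ≤ E.re := by
    rw [hEre]
    have : ∑ i, ∑ j, 𝕂 i j * (a i * a j + b i * b j)
        = (∑ i, ∑ j, 𝕂 i j * (a i * a j)) + ∑ i, ∑ j, 𝕂 i j * (b i * b j) := by
      rw [← Finset.sum_add_distrib]
      refine Finset.sum_congr rfl fun i _ => ?_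
      rw [← Finset.sum_add_distrib]
      exact Finset.sum_congr rfl fun j _ => by ring
    rw [this]
    exact add_nonneg (hquad a) (hquad b)
  -- E.re ≤ c
  have hc2 : c = ∑ i, ∑ j, 𝕂 i j * Complex.normSq (v i) := by
    rw [hc]
    refine Finset.sum_congr rfl fun i _ => ?_
    rw [hr i, Finset.sum_mul]
  have hswap2 : ∑ i, ∑ j, 𝕂 i j * Complex.normSq (v j)
      = ∑ i, ∑ j, 𝕂 i j * Complex.normSq (v i) := by
    rw [Finset.sum_comm]
    refine Finset.sum_congr rfl fun i _ => Finset.sum_congr rfl fun j _ => ?_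
    rw [hsymm.apply i j]
  have hErec : E.re ≤ c := by
    rw [hEre]
    have hstep : ∑ i, ∑ j, 𝕂 i j * (a i * a j + b i * b j)
        ≤ ∑ i, ∑ j, 𝕂 i j * ((Complex.normSq (v i) + Complex.normSq (v j)) / 2) := by
      refine Finset.sum_le_sum fun i _ => Finset.sum_le_sum fun j _ => ?_
      refine mul_le_mul_of_nonneg_left ?_ (hnonneg i j)
      have h1 : Complex.normSq (v i) = a i ^ 2 + b i ^ 2 := by
        simp [Complex.normSq_apply, ha, hb]; ring
      have h2 : Complex.normSq (v j) = a j ^ 2 + b j ^ 2 := by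
        simp [Complex.normSq_apply, ha, hb]; ring
      rw [h1, h2]
      nlinarith [sq_nonneg (a i - a j), sq_nonneg (b i - b j)]
    refine hstep.trans ?_
    have : ∑ i, ∑ j, 𝕂 i j * ((Complex.normSq (v i) + Complex.normSq (v j)) / 2)
        = ((∑ i, ∑ j, 𝕂 i j * Complex.normSq (v i))
          + ∑ i, ∑ j, 𝕂 i j * Complex.normSq (v j)) / 2 := by
      rw [← Finset.sum_add_distrib, Finset.sum_div]
      refine Finset.sum_congr rfl fun i _ => ?_
      rw [← Finset.sum_add_distrib, Finset.sum_div]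
      exact Finset.sum_congr rfl fun j _ => by ring
    rw [this, hswap2, hc2]
    linarith
  -- conclude
  have him : μ.im * c = 0 := by
    have := congrArg Complex.im hEμc
    rw [hEim0] at this
    simpa [Complex.mul_im] using this.symm
  have hre : μ.re * c = E.re := by
    have := congrArg Complex.re hEμc
    rw [this]
    simp [Complex.mul_re]
  refine ⟨?_, ?_, ?_⟩
  · rcases mul_eq_zero.mp him with h | h
    · exact h
    · exact absurd h hcpos.ne'
  · nlinarith
  · nlinarith
end

section
/- Let 𝕂 be a symmetric n×n real matrix having at least one strictly negative eigenvalue, and let D be a diagonal n×n matrix with strictly positive diagonal entries. Then the largest singular value of I − D𝕂 is strictly greater than 1. -/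
open Matrix

/-! Put `x = D⁻¹v`. Symmetry of `𝕂` gives `⟪x, D𝕂x⟫ = ⟪v, 𝕂x⟫ = ⟪𝕂v, x⟫ = μ ∑ vᵢ² / dᵢ < 0`, so
`‖x - D𝕂x‖² = ‖x‖² - 2⟪x, D𝕂x⟫ + ‖D𝕂x‖² > ‖x‖²`, and `I - D𝕂` has norm greater than one. -/

theorem one_lt_norm_one_sub_of_inner_neg {E : Type*} [NormedAddCommGroup E] [InnerProductSpace ℝ E]
    (B : E →L[ℝ] E) {x : E} (hx : inner ℝ x (B x) < 0) : 1 < ‖1 - B‖ := by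
  have hx0 : 0 < ‖x‖ := norm_pos_iff.mpr fun h => by simp [h] at hx
  have hstretch : ‖x‖ < ‖(1 - B) x‖ := by
    have hsq : ‖x‖ ^ 2 < ‖x - B x‖ ^ 2 := by
      rw [norm_sub_sq_real]
      nlinarith [sq_nonneg ‖B x‖]
    simpa using lt_of_pow_lt_pow_left₀ 2 (norm_nonneg _) hsq
  have hbound := hstretch.trans_le ((1 - B).le_opNorm x)
  nlinarith

theorem dotProduct_diagonal_mul_mulVec_of_mulVec_eq_smul {m R : Type*} [Fintype m] [DecidableEq m]
    [CommSemiring R] {K : Matrix m m R} (hK : K.IsSymm) {d x : m → R} {μ : R}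
    (hv : K *ᵥ (d * x) = μ • (d * x)) :
    x ⬝ᵥ (diagonal d * K) *ᵥ x = μ * ∑ i, d i * x i ^ 2 := by
  have hdiag : x ⬝ᵥ diagonal d *ᵥ (K *ᵥ x) = (d * x) ⬝ᵥ K *ᵥ x := by
    simp only [dotProduct, mulVec_diagonal, Pi.mul_apply]
    exact Finset.sum_congr rfl fun i _ => by ring
  rw [← mulVec_mulVec, hdiag, dotProduct_mulVec, ← mulVec_transpose, hK.eq, hv, smul_dotProduct,
    smul_eq_mul, dotProduct]
  congr 1
  exact Finset.sum_congr rfl fun i _ => by simp only [Pi.mul_apply]; ring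

/-- **A negative kernel eigenvalue forces a large singular value of `I − D𝕂`.**
If `𝕂` is symmetric with a strictly negative eigenvalue and `D` is diagonal with
strictly positive diagonal entries, then the largest singular value (operator norm)
of `I − D𝕂` is strictly greater than one. -/
theorem negative_kernel_eigenvalue_singular_value_gt_one
    {n : ℕ} (𝕂 : Matrix (Fin n) (Fin n) ℝ) (hsymm : 𝕂.IsSymm)
    (hneg : ∃ (μ : ℝ) (v : Fin n → ℝ), μ < 0 ∧ v ≠ 0 ∧ 𝕂.mulVec v = μ • v)
    (d : Fin n → ℝ) (hd : ∀ i, 0 < d i) :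
    1 < ‖Matrix.toEuclideanCLM (𝕜 := ℝ) (n := Fin n)
        ((1 : Matrix (Fin n) (Fin n) ℝ) - Matrix.diagonal d * 𝕂)‖ := by
  obtain ⟨μ, v, hμ, hv0, hv⟩ := hneg
  have hdx : d * (v / d) = v := funext fun i => mul_div_cancel₀ _ (hd i).ne'
  have hx0 : v / d ≠ 0 := fun h => hv0 (by rw [← hdx, h, mul_zero])
  have hmass : 0 < ∑ i, d i * (v / d) i ^ 2 := by
    obtain ⟨j, hj⟩ := Function.ne_iff.mp hx0
    exact Finset.sum_pos' (fun i _ => by have := hd i; positivity)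
      ⟨j, Finset.mem_univ _, mul_pos (hd j) (sq_pos_of_ne_zero hj)⟩
  rw [map_sub, map_one]
  apply one_lt_norm_one_sub_of_inner_neg _ (x := WithLp.toLp 2 (v / d))
  rw [toEuclideanCLM_toLp, EuclideanSpace.inner_eq_star_dotProduct, star_trivial, dotProduct_comm,
    dotProduct_diagonal_mul_mulVec_of_mulVec_eq_smul hsymm (hdx ▸ hv)]
  exact mul_neg_of_neg_of_pos hμ hmass
end

section
/- Let K : ℝ → ℝ be an even, bounded, integrable function whose Fourier transform K̂(t) = ∫ e^{−2πitx} K(x) dx is strictly negative at every point of a set A ⊆ ℝ of strictly positive, finite Lebesgue measure. Then there exists a real-valued function φ ∈ L¹(ℝ) ∩ L²(ℝ) such that ∫∫ φ(x) φ(y) K(x−y) dx dy < 0. -/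
/-! For a real even bump `g` supported where `Re K̂ < 0`, take `φ = ĝ`, a real Schwartz function.
By the convolution theorem, the multiplication formula `∫ 𝓕 f · h = ∫ f · 𝓕 h` and Fourier
inversion in the form `𝓕 (𝓕 g) = g ∘ neg`, the quadratic form of `φ` equals
`∫ g(t)² Re K̂(t) dt < 0`. Since `K` is real, `K̂(-t) = conj K̂(t)`, so the open set `{Re K̂ < 0}`
is symmetric and does carry an even bump. -/

open MeasureTheory Real Complex

open FourierTransform Convolution ComplexConjugate ContDiff SchwartzMap

namespace Real

variable {V : Type*} [NormedAddCommGroup V] [InnerProductSpace ℝ V] [FiniteDimensional ℝ V]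
  [MeasurableSpace V] [BorelSpace V]

theorem conj_fourier_ofReal (f : V → ℝ) (w : V) :
    conj (𝓕 (fun v ↦ (f v : ℂ)) w) = 𝓕 (fun v ↦ (f v : ℂ)) (-w) := by
  simp only [fourier_eq, ← integral_conj, Circle.smul_def, smul_eq_mul, map_mul, conj_ofReal,
    inner_neg_right, ← Circle.coe_inv_eq_conj, ← AddChar.map_neg_eq_inv, neg_neg]

theorem fourier_fourier_apply {f : V → ℂ} (hf : Continuous f) (hfi : Integrable f)
    (hFf : Integrable (𝓕 f)) (w : V) : 𝓕 (𝓕 f) w = f (-w) := by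
  have := congrFun (hf.fourierInv_fourier_eq hfi hFf) (-w)
  rwa [fourierInv_eq_fourier_neg, neg_neg] at this

theorem integral_fourier_mul_eq {f g : V → ℂ} (hf : Integrable f) (hg : Integrable g) :
    ∫ ξ, 𝓕 f ξ * g ξ = ∫ x, f x * 𝓕 g x := by
  simpa [real_inner_comm] using! VectorFourier.integral_fourierIntegral_smul_eq_flip
    (L := innerₗ V) continuous_fourierChar continuous_inner hf hg

theorem integral_fourier_mul_integral_fourier_mul_sub {f K : V → ℂ} (hf : Continuous f)
    (hfi : Integrable f) (hFf : Integrable (𝓕 f)) (hK : Integrable K) :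
    ∫ x, 𝓕 f x * ∫ y, 𝓕 f y * K (x - y) = ∫ t, f t * f (-t) * 𝓕 K t := by
  have hconv : Integrable (𝓕 f ⋆[ContinuousLinearMap.mul ℂ ℂ] K) :=
    hFf.integrable_convolution _ hK
  calc ∫ x, 𝓕 f x * ∫ y, 𝓕 f y * K (x - y)
      = ∫ x, 𝓕 f x * (𝓕 f ⋆[ContinuousLinearMap.mul ℂ ℂ] K) x := by
        simp [convolution_def]
    _ = ∫ t, f t * 𝓕 (𝓕 f ⋆[ContinuousLinearMap.mul ℂ ℂ] K) t :=
        integral_fourier_mul_eq hfi hconv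
    _ = ∫ t, f t * f (-t) * 𝓕 K t := by
        simp_rw [fourier_mul_convolution_eq hFf hK, fourier_fourier_apply hf hfi hFf, mul_assoc]

theorem _root_.MeasureTheory.Integrable.continuous_fourier {E : Type*} [NormedAddCommGroup E]
    [NormedSpace ℂ E] {f : V → E} (hf : Integrable f) : Continuous (𝓕 f) :=
  VectorFourier.fourierIntegral_continuous continuous_fourierChar continuous_inner hf

theorem ofReal_re_fourier_ofReal_of_even {g : V → ℝ} (hg : ∀ v, g (-v) = g v) (w : V) :
    ((𝓕 (fun v ↦ (g v : ℂ)) w).re : ℂ) = 𝓕 (fun v ↦ (g v : ℂ)) w := by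
  rw [← conj_eq_iff_re, conj_fourier_ofReal, ← fourierInv_eq_fourier_neg,
    fourierInv_eq_fourier_comp_neg]
  simp only [hg]

theorem integral_integral_re_fourier_mul_sub_of_even {g K : V → ℝ} (hg : ContDiff ℝ ∞ g)
    (hgs : HasCompactSupport g) (hg_even : ∀ v, g (-v) = g v) (hK : Integrable K) :
    ∫ x, ∫ y, (𝓕 (fun v ↦ (g v : ℂ)) x).re * (𝓕 (fun v ↦ (g v : ℂ)) y).re * K (x - y) =
      ∫ t, g t ^ 2 * (𝓕 (fun v ↦ (K v : ℂ)) t).re := by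
  set gc : V → ℂ := fun v ↦ (g v : ℂ)
  set Kc : V → ℂ := fun v ↦ (K v : ℂ)
  have hgc : ContDiff ℝ ∞ gc := ofRealCLM.contDiff.comp hg
  have hgcs : HasCompactSupport gc := hgs.comp_left ofReal_zero
  have hKc : Integrable Kc := hK.ofReal
  have hreal : ∀ w, ((𝓕 gc w).re : ℂ) = 𝓕 gc w := ofReal_re_fourier_ofReal_of_even hg_even
  have hcomplex : ((∫ x, ∫ y, (𝓕 gc x).re * (𝓕 gc y).re * K (x - y) : ℝ) : ℂ) =
      ∫ t, ((g t ^ 2 : ℝ) : ℂ) * 𝓕 Kc t := calc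
    _ = ∫ x, 𝓕 gc x * ∫ y, 𝓕 gc y * Kc (x - y) := by
      rw [← integral_complex_ofReal]
      congr 1 with x
      rw [← integral_complex_ofReal, ← integral_const_mul]
      congr 1 with y
      simp only [ofReal_mul, hreal, Kc, mul_assoc]
    _ = ∫ t, gc t * gc (-t) * 𝓕 Kc t :=
      integral_fourier_mul_integral_fourier_mul_sub hgc.continuous
        (hgc.continuous.integrable_of_hasCompactSupport hgcs)
        (𝓕 (hgcs.toSchwartzMap hgc)).integrable hKc
    _ = _ := by simp only [gc, hg_even, ofReal_mul, sq]
  have hint : Integrable fun t ↦ ((g t ^ 2 : ℝ) : ℂ) * 𝓕 Kc t := by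
    refine Continuous.integrable_of_hasCompactSupport ?_ ?_
    · exact (continuous_ofReal.comp (hg.continuous.pow 2)).mul hKc.continuous_fourier
    · exact (hgs.comp_left (g := fun s : ℝ ↦ ((s ^ 2 : ℝ) : ℂ)) (by simp)).mul_right
  have := congrArg re hcomplex
  rw [ofReal_re] at this
  simpa only [RCLike.re_to_complex, re_ofReal_mul] using this.trans (integral_re hint).symm

end Real

theorem exists_contDiff_even_ne_zero_support_subset {E : Type*} [NormedAddCommGroup E]
    [InnerProductSpace ℝ E] [FiniteDimensional ℝ E] {U : Set E} (hU : IsOpen U)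
    (hU_neg : ∀ x ∈ U, -x ∈ U) {x₀ : E} (hx₀ : x₀ ∈ U) :
    ∃ g : E → ℝ, ContDiff ℝ ∞ g ∧ HasCompactSupport g ∧ (∀ x, g (-x) = g x) ∧ g x₀ ≠ 0 ∧
      Function.support g ⊆ U := by
  obtain ⟨δ, hδ, hball⟩ := Metric.isOpen_iff.mp hU x₀ hx₀
  let b : ContDiffBump x₀ := ⟨δ / 2, δ, by positivity, by linarith⟩
  refine ⟨fun x ↦ b x + b (-x), b.contDiff.add (b.contDiff.comp contDiff_neg),
    b.hasCompactSupport.add (b.hasCompactSupport.comp_homeomorph (Homeomorph.neg E)),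
    fun x ↦ by simp only [neg_neg, add_comm], ?_, ?_⟩
  · have hb₀ : b x₀ = 1 := b.one_of_mem_closedBall (Metric.mem_closedBall_self (by positivity))
    have := b.nonneg (x := -x₀)
    show b x₀ + b (-x₀) ≠ 0
    rw [hb₀]
    positivity
  · intro x hx
    rcases Function.support_add _ _ hx with hx | hx
    · exact hball (b.support_eq ▸ hx)
    · simpa using hU_neg _ (hball (b.support_eq ▸ hx : -x ∈ _))

theorem Continuous.integral_neg_of_hasCompactSupport_nonpos_nonzero {X : Type*}
    [TopologicalSpace X] [MeasurableSpace X] [OpensMeasurableSpace X] {μ : Measure X}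
    [μ.IsOpenPosMeasure] [IsFiniteMeasureOnCompacts μ] {f : X → ℝ} {x : X} (hf : Continuous f)
    (hfs : HasCompactSupport f) (hf_nonpos : f ≤ 0) (hfx : f x ≠ 0) : ∫ x, f x ∂μ < 0 := by
  have := hf.neg.integral_pos_of_hasCompactSupport_nonneg_nonzero (μ := μ) hfs.neg
    (fun y ↦ neg_nonneg.2 (hf_nonpos y)) (neg_ne_zero.2 hfx)
  simp only [Pi.neg_apply, integral_neg] at this
  linarith

theorem nonposdef_kernel_negative_quadratic_form_general
    (K : ℝ → ℝ)
    (hint : Integrable K)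
    (A : Set ℝ)
    (hpos : 0 < volume A)
    (hneg : ∀ t ∈ A, (FourierTransform.fourier (fun x => (K x : ℂ)) t).re < 0) :
    ∃ φ : ℝ → ℝ, Integrable φ ∧ MemLp φ 2 volume ∧
      (∫ x, ∫ y, φ x * φ y * K (x - y)) < 0 := by
  set r : ℝ → ℝ := fun t ↦ (𝓕 (fun x ↦ (K x : ℂ)) t).re
  have hr : Continuous r := continuous_re.comp hint.ofReal.continuous_fourier
  have hr_even : ∀ t, r (-t) = r t := fun t ↦ by
    simp only [r, ← conj_fourier_ofReal, conj_re]
  obtain ⟨t₀, ht₀⟩ := nonempty_of_measure_ne_zero hpos.ne'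
  obtain ⟨g, hg, hgs, hg_even, hgt₀, hg_supp⟩ := exists_contDiff_even_ne_zero_support_subset
    (isOpen_lt hr continuous_const) (fun t (ht : r t < 0) ↦ show r (-t) < 0 by rwa [hr_even])
    (hneg t₀ ht₀)
  let S : 𝓢(ℝ, ℂ) := (hgs.comp_left ofReal_zero).toSchwartzMap (ofRealCLM.contDiff.comp hg)
  refine ⟨fun x ↦ (𝓕 (fun v ↦ (g v : ℂ)) x).re, (𝓕 S).integrable.re,
    ((𝓕 S).memLp 2 volume).re, ?_⟩
  rw [integral_integral_re_fourier_mul_sub_of_even hg hgs hg_even hint]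
  refine (hg.continuous.pow 2).mul hr |>.integral_neg_of_hasCompactSupport_nonpos_nonzero
    (x := t₀) (hgs.comp_left (g := fun s : ℝ ↦ s ^ 2) (by simp)).mul_right (fun t ↦ ?_)
    (mul_ne_zero (pow_ne_zero 2 hgt₀) (hneg t₀ ht₀).ne)
  by_cases ht : g t = 0
  · simp [ht]
  · exact mul_nonpos_of_nonneg_of_nonpos (sq_nonneg _) (hg_supp ht).le

/-- **Non-positive-definite kernels admit a test function with negative energy.**
If `K : ℝ → ℝ` is even, bounded and integrable, and its Fourier transform
`K̂(t) = ∫ e^{−2πitx} K(x) dx` is strictly negative on a set `A` of strictly positive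
finite Lebesgue measure, then there is a real `φ ∈ L¹ ∩ L²` with
`∫∫ φ(x) φ(y) K(x−y) dx dy < 0`. -/
theorem nonposdef_kernel_negative_quadratic_form
    (K : ℝ → ℝ) (heven : ∀ x, K (-x) = K x)
    (hbdd : ∃ C : ℝ, ∀ x, |K x| ≤ C)
    (hint : Integrable K)
    (A : Set ℝ) (hmeas : MeasurableSet A)
    (hpos : 0 < volume A) (hfin : volume A < ⊤)
    (hneg : ∀ t ∈ A, (FourierTransform.fourier (fun x => (K x : ℂ)) t).re < 0) :
    ∃ φ : ℝ → ℝ, Integrable φ ∧ MemLp φ 2 volume ∧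
      (∫ x, ∫ y, φ x * φ y * K (x - y)) < 0 :=
  nonposdef_kernel_negative_quadratic_form_general K hint A hpos hneg
end

section
/- Let K be the uniform kernel K(u) = (1/2)·1{|u| ≤ 1}, h > 0, and Kₕ(t) = K(t/h)/h. Let X₁,…,Xₙ ∈ ℝ be design points such that there exist indices i₁, i₂, i₃ with |X_{i₂} − X_{i₁}| ≤ h, |X_{i₃} − X_{i₂}| ≤ h, and |X_{i₃} − X_{i₁}| > h. Then: (a) the 3×3 principal minor of the Gram matrix 𝕂 = [Kₕ(Xᵢ − Xⱼ)]ᵢⱼ on rows and columns (i₁, i₂, i₃) has strictly negative determinant, equal to −Kₕ(0)³, so 𝕂 is not positive semidefinite; and (b) the largest singular value of I − S, where S = D𝕂 is the Nadaraya–Watson smoothing matrix with D diagonal, Dᵢᵢ = 1/Σₗ Kₕ(Xᵢ − Xₗ), is strictly greater than 1. -/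
/-!
Since `Kₕ` is the constant `κ = Kₕ(0) > 0` on `[-h, h]` and vanishes outside, the Gram matrix
restricted to `i₁, i₂, i₃` is `κ • !![1, 1, 0; 1, 1, 1; 0, 1, 1]`, whose determinant is `-κ³`;
a principal minor of a positive semidefinite matrix is nonnegative.

For `v = e_{i₁} - e_{i₂} + e_{i₃}` one gets `𝕂 v = κ e_{i₂}` on these coordinates, hence
`⟪v, S v⟫ = -κ / ∑ₗ 𝕂_{i₂ l} < 0`. Then `‖(I - S) v‖² = ‖v‖² - 2⟪v, S v⟫ + ‖S v‖² > ‖v‖²`.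
-/

open Matrix

open scoped RealInnerProductSpace in
theorem ContinuousLinearMap.one_lt_norm_id_sub_of_inner_neg {E : Type*} [NormedAddCommGroup E]
    [InnerProductSpace ℝ E] (A : E →L[ℝ] E) {x : E} (hx : ⟪x, A x⟫ < 0) :
    1 < ‖ContinuousLinearMap.id ℝ E - A‖ := by
  have hx₀ : 0 < ‖x‖ := norm_pos_iff.mpr fun h => by simp [h] at hx
  have hsq : ‖x‖ ^ 2 < ‖x - A x‖ ^ 2 := by
    rw [norm_sub_sq_real]; nlinarith [sq_nonneg ‖A x‖]
  have hlt : 1 * ‖x‖ < ‖ContinuousLinearMap.id ℝ E - A‖ * ‖x‖ :=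
    calc 1 * ‖x‖ < ‖x - A x‖ := by
          rw [one_mul]; exact lt_of_pow_lt_pow_left₀ 2 (norm_nonneg _) hsq
      _ ≤ _ := (ContinuousLinearMap.id ℝ E - A).le_opNorm x
  exact lt_of_mul_lt_mul_right hlt hx₀.le

namespace Matrix

variable {n : Type*} [Fintype n] [DecidableEq n]

theorem one_lt_norm_toEuclideanCLM_one_sub (S : Matrix n n ℝ) {v : n → ℝ}
    (hv : v ⬝ᵥ S *ᵥ v < 0) :
    1 < ‖toEuclideanCLM (𝕜 := ℝ) (n := n) (1 - S)‖ := by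
  rw [map_sub, map_one]
  exact (toEuclideanCLM (𝕜 := ℝ) S).one_lt_norm_id_sub_of_inner_neg (x := WithLp.toLp 2 v)
    (by rwa [inner_toEuclideanCLM])

theorem dotProduct_mulVec_sum_single {R m : Type*} [CommSemiring R] [Fintype m]
    (M : Matrix n n R) (e : m → n) (w : m → R) :
    (∑ k, Pi.single (e k) (w k)) ⬝ᵥ M *ᵥ ∑ k, Pi.single (e k) (w k) =
      w ⬝ᵥ M.submatrix e e *ᵥ w := by
  simp only [mulVec_sum, sum_dotProduct, single_dotProduct, Finset.sum_apply]
  simp only [mulVec, dotProduct_single]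
  rfl

theorem submatrix_diagonal_mul {R m : Type*} [Semiring R] [Fintype m] [DecidableEq m]
    (d : n → R) (M : Matrix n n R) (e : m → n) :
    (diagonal d * M).submatrix e e = diagonal (d ∘ e) * M.submatrix e e := by
  ext; simp [diagonal_mul]

end Matrix

def chainPattern : Matrix (Fin 3) (Fin 3) ℝ := !![1, 1, 0; 1, 1, 1; 0, 1, 1]

theorem det_smul_chainPattern (c : ℝ) : (c • chainPattern).det = -c ^ 3 := by
  rw [det_smul, chainPattern, det_fin_three]; simp

theorem dotProduct_diagonal_mul_smul_chainPattern_mulVec (d : Fin 3 → ℝ) (c : ℝ) :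
    ![1, -1, 1] ⬝ᵥ (diagonal d * (c • chainPattern)) *ᵥ ![1, -1, 1] = -(d 1 * c) := by
  simp [chainPattern, dotProduct, mulVec, Fin.sum_univ_three, diagonal_mul]

noncomputable def uniformKernelGram {ι : Type*} (X : ι → ℝ) (h κ : ℝ) : Matrix ι ι ℝ :=
  of fun i j => if |X i - X j| ≤ h then κ else 0

theorem uniformKernelGram_nonneg {ι : Type*} (X : ι → ℝ) (h : ℝ) {κ : ℝ} (hκ : 0 ≤ κ)
    (i j : ι) : 0 ≤ uniformKernelGram X h κ i j := by
  rw [uniformKernelGram, of_apply]; split_ifs <;> simp [hκ]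

theorem uniformKernelGram_apply_self {ι : Type*} (X : ι → ℝ) {h : ℝ} (hh : 0 ≤ h) (κ : ℝ)
    (i : ι) : uniformKernelGram X h κ i i = κ := by
  simp [uniformKernelGram, hh]

theorem submatrix_uniformKernelGram_eq_smul_chainPattern {ι : Type*} (X : ι → ℝ) {h : ℝ}
    (hh : 0 ≤ h) (κ : ℝ) {i₁ i₂ i₃ : ι} (h12 : |X i₂ - X i₁| ≤ h) (h23 : |X i₃ - X i₂| ≤ h)
    (h13 : h < |X i₃ - X i₁|) :
    (uniformKernelGram X h κ).submatrix ![i₁, i₂, i₃] ![i₁, i₂, i₃] = κ • chainPattern := by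
  rw [abs_sub_comm] at h12 h23 h13
  ext a b
  fin_cases a <;> fin_cases b <;>
    simp [uniformKernelGram, chainPattern, hh, h12, h23, h13, abs_sub_comm]

theorem uniformKernel_eq_ite {h : ℝ} (hh : 0 < h) {Kh : ℝ → ℝ}
    (hKh : ∀ t, Kh t = (if |t / h| ≤ 1 then (1 : ℝ) / 2 else 0) / h) (t : ℝ) :
    Kh t = if |t| ≤ h then Kh 0 else 0 := by
  simp [hKh, abs_div, abs_of_pos hh, div_le_one hh, ite_div]

/-- **The uniform kernel yields a non-PSD Gram matrix and a large singular value of `I−S`.**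
For the uniform kernel `K(u) = (1/2)·1{|u| ≤ 1}` with bandwidth `h > 0`,
`Kₕ(t) = K(t/h)/h`, if three design points satisfy `|X_{i₂}−X_{i₁}| ≤ h`,
`|X_{i₃}−X_{i₂}| ≤ h` and `|X_{i₃}−X_{i₁}| > h`, then (a) the principal `3×3` minor of
the Gram matrix `𝕂 = [Kₕ(Xᵢ−Xⱼ)]` on rows and columns `(i₁,i₂,i₃)` has determinant
`−Kₕ(0)³ < 0`, so `𝕂` is not positive semidefinite, and (b) the largest singular value
(operator norm) of `I − S`, with `S = D𝕂` the Nadaraya–Watson smoothing matrix, exceeds 1. -/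
theorem uniform_kernel_not_psd_and_singular_value_gt_one
    {n : ℕ} (h : ℝ) (hh : 0 < h)
    (Kh : ℝ → ℝ) (hKh : ∀ t, Kh t = (if |t / h| ≤ 1 then (1 : ℝ) / 2 else 0) / h)
    (X : Fin n → ℝ) (i₁ i₂ i₃ : Fin n)
    (h12 : |X i₂ - X i₁| ≤ h) (h23 : |X i₃ - X i₂| ≤ h) (h13 : h < |X i₃ - X i₁|)
    (𝕂 : Matrix (Fin n) (Fin n) ℝ) (hKmat : 𝕂 = Matrix.of fun i j => Kh (X i - X j))
    (S : Matrix (Fin n) (Fin n) ℝ)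
    (hS : S = Matrix.diagonal (fun i => (∑ l, 𝕂 i l)⁻¹) * 𝕂) :
    (𝕂.submatrix ![i₁, i₂, i₃] ![i₁, i₂, i₃]).det = -(Kh 0) ^ 3 ∧
    (𝕂.submatrix ![i₁, i₂, i₃] ![i₁, i₂, i₃]).det < 0 ∧
    ¬ 𝕂.PosSemidef ∧
    1 < ‖Matrix.toEuclideanCLM (𝕜 := ℝ) (n := Fin n)
        ((1 : Matrix (Fin n) (Fin n) ℝ) - S)‖ := by
  have hκ : 0 < Kh 0 := by simp [hKh, hh]
  have hgram : 𝕂 = uniformKernelGram X h (Kh 0) := by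
    rw [hKmat]; ext i j; exact uniformKernel_eq_ite hh hKh _
  have hblock : 𝕂.submatrix ![i₁, i₂, i₃] ![i₁, i₂, i₃] = Kh 0 • chainPattern := by
    rw [hgram]; exact submatrix_uniformKernelGram_eq_smul_chainPattern X hh.le _ h12 h23 h13
  have hdet : (𝕂.submatrix ![i₁, i₂, i₃] ![i₁, i₂, i₃]).det = -(Kh 0) ^ 3 := by
    rw [hblock, det_smul_chainPattern]
  have hdet_neg : (𝕂.submatrix ![i₁, i₂, i₃] ![i₁, i₂, i₃]).det < 0 := by
    rw [hdet]; exact neg_neg_of_pos (pow_pos hκ 3)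
  refine ⟨hdet, hdet_neg, fun hpsd => hdet_neg.not_ge (hpsd.submatrix _).det_nonneg, ?_⟩
  have hrow : 0 < ∑ l, 𝕂 i₂ l := by
    rw [hgram]
    exact Finset.sum_pos' (fun j _ => uniformKernelGram_nonneg X h hκ.le i₂ j)
      ⟨i₂, Finset.mem_univ _, by rwa [uniformKernelGram_apply_self X hh.le]⟩
  apply S.one_lt_norm_toEuclideanCLM_one_sub
    (v := ∑ k, Pi.single (![i₁, i₂, i₃] k) (![1, -1, 1] k))
  rw [dotProduct_mulVec_sum_single, hS, submatrix_diagonal_mul, hblock,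
    dotProduct_diagonal_mul_smul_chainPattern_mulVec]
  simpa using mul_pos (inv_pos.mpr hrow) hκ
end
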